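/- arXiv:1706.07255 — 2 statements merged into one kernel-verified Lean document; each statement's English description precedes it below -/
import Mathlib

section
/- For every real constant c > 0, there exist a connected simple graph G (which may be taken to be a figure-8 graph) and configurations X_I, X_G on G such that the instance (G, X_I, X_G) is feasible and every solution from X_I to X_G has makespan strictly greater than c·|V(G)|. Consequently, the minimum-makespan multi-robot path planning problem does not admit solutions of linear or sub-linear makespan on arbitrary graphs. -/
open SimpleGraph

def IsMove {V : Type*} (G : SimpleGraph V) (X Y : Equiv.Perm V) : Prop :=
  (∀ r, Y r = X r ∨ G.Adj (X r) (Y r)) ∧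
  (∀ r s, r ≠ s → ¬(Y r = X s ∧ Y s = X r ∧ X r ≠ X s))

def IsSolution {V : Type*} (G : SimpleGraph V) (XI XG : Equiv.Perm V) (T : ℕ)
    (Xs : ℕ → Equiv.Perm V) : Prop :=
  Xs 0 = XI ∧ Xs T = XG ∧ ∀ t < T, IsMove G (Xs t) (Xs (t + 1))

/-- Vertex set of the figure-8 graph `F n`: two junction vertices, plus the internal
vertices of three paths with `n`, `3n+2` and `3n+2` internal vertices respectively.
In total `7n + 6` vertices. -/
abbrev F8V (n : ℕ) := Fin 2 ⊕ (Fin n ⊕ (Fin (3 * n + 2) ⊕ Fin (3 * n + 2)))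

/-- One-directional edge relation for the figure-8 graph: junction `0` is attached to
the first internal vertex of each path, junction `1` to the last, consecutive internal
vertices of each path are adjacent, and when `n = 0` the first path degenerates to an
edge between the two junctions. -/
def F8Rel (n : ℕ) : F8V n → F8V n → Prop
  | .inl a, .inl b => n = 0 ∧ a.val = 0 ∧ b.val = 1
  | .inl a, .inr (.inl i) => (a.val = 0 ∧ i.val = 0) ∨ (a.val = 1 ∧ i.val + 1 = n)
  | .inl a, .inr (.inr (.inl i)) =>
      (a.val = 0 ∧ i.val = 0) ∨ (a.val = 1 ∧ i.val + 1 = 3 * n + 2)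
  | .inl a, .inr (.inr (.inr i)) =>
      (a.val = 0 ∧ i.val = 0) ∨ (a.val = 1 ∧ i.val + 1 = 3 * n + 2)
  | .inr (.inl i), .inr (.inl k) => i.val + 1 = k.val
  | .inr (.inr (.inl i)), .inr (.inr (.inl k)) => i.val + 1 = k.val
  | .inr (.inr (.inr i)), .inr (.inr (.inr k)) => i.val + 1 = k.val
  | _, _ => False

/-- The figure-8 graph `F n` on `7n + 6` vertices: two junction vertices joined by
three internally vertex-disjoint paths having `n`, `3n+2` and `3n+2` internal
vertices respectively. -/
def figureEight (n : ℕ) : SimpleGraph (F8V n) := SimpleGraph.fromRel (F8Rel n)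

/-!
A synchronous move `X → Y` is recorded by the vertex permutation `Y * X⁻¹`, which moves every vertex
to itself or to a neighbour and has no 2-cycle. On a path whose inner vertices have degree two such
a permutation shifts all inner vertices forward, all backward, or none, so on `F n` it is determined
by its values at the first inner vertex of the three paths: there are at most `27` moves, and at
most `27 ^ L` configurations are reached from the identity in `L` moves. On the other hand the
rotations along the three cycles of `F n` are moves, and
`rotation n 1 2 * (rotation n 0 2)⁻¹ * rotation n 0 1` is the transposition of two consecutive
vertices of the `(6n+6)`-cycle through paths `1` and `2`. Together with `rotation n 1 2` it
generates the symmetric group of that cycle, so at least `(6n+6)!` configurations are feasible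
targets; since `27 ^ (⌈c⌉₊ * (7n+6)) < (6n+6)!` for large `n`, one of them needs more than
`c * (7n+6)` moves.
-/

open Equiv Equiv.Perm
open scoped Nat Pointwise

section MovePerm

variable {V : Type*} {G : SimpleGraph V} {μ ν : Perm V}

def IsMovePerm (G : SimpleGraph V) (μ : Perm V) : Prop :=
  (∀ v, μ v = v ∨ G.Adj v (μ v)) ∧ ∀ v, μ (μ v) = v → μ v = v

lemma isMove_iff_isMovePerm {X Y : Perm V} : IsMove G X Y ↔ IsMovePerm G (Y * X⁻¹) := by
  have hYX (r : V) : (Y * X⁻¹) (X r) = Y r := by simp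
  constructor
  · rintro ⟨hstep, hswap⟩
    refine ⟨fun v => ?_, fun v hv => ?_⟩
    · obtain ⟨r, rfl⟩ := X.surjective v
      simpa [hYX] using hstep r
    · obtain ⟨r, rfl⟩ := X.surjective v
      obtain ⟨s, hs⟩ := X.surjective (Y r)
      rw [hYX, ← hs, hYX] at hv
      rw [hYX, ← hs]
      by_contra hne
      exact hswap r s (fun h => hne (h ▸ rfl)) ⟨hs.symm, hv, Ne.symm hne⟩
  · rintro ⟨hstep, hswap⟩
    refine ⟨fun r => by simpa [hYX] using hstep (X r), fun r s _ ⟨hrs, hsr, hne⟩ => hne ?_⟩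
    have h := hswap (X r) (by rw [hYX, hrs, hYX, hsr])
    rw [hYX] at h
    rw [← h, hrs]

lemma isMovePerm_one : IsMovePerm G 1 := ⟨fun _ => .inl rfl, fun _ _ => rfl⟩

lemma IsMovePerm.inv (hμ : IsMovePerm G μ) : IsMovePerm G μ⁻¹ := by
  refine ⟨fun v => ?_, fun v hv => ?_⟩ <;> obtain ⟨w, rfl⟩ := μ.surjective v
  · rcases hμ.1 w with h | h
    · exact .inl (by simpa using h.symm)
    · exact .inr (by simpa using h.symm)
  · have h : μ (μ w) = w := (μ.symm_apply_eq.1 (by simpa using hv)).symm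
    simpa using (hμ.2 w h).symm

lemma IsMovePerm.isMove (hμ : IsMovePerm G μ) (X : Perm V) : IsMove G X (μ * X) :=
  isMove_iff_isMovePerm.2 (by simpa [mul_assoc] using hμ)

/-- Since `μ` is a bijection without 2-cycles, a robot can enter `v` from `a` only if the robot
at `v` leaves towards `b`, and vice versa. -/
lemma IsMovePerm.apply_eq_iff_apply_eq (hμ : IsMovePerm G μ) {a v b : V} (hav : a ≠ v)
    (hbv : b ≠ v) (hv : ∀ x, G.Adj v x → x = a ∨ x = b) : μ a = v ↔ μ v = b := by
  constructor
  · intro ha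
    rcases hμ.1 v with h | h
    · exact absurd (μ.injective (ha.trans h.symm)) hav
    · rcases hv _ h with h | h
      · exact absurd (hμ.2 a (by rw [ha, h])) (ha ▸ hav.symm)
      · exact h
  · intro hb
    obtain ⟨w, hw⟩ := μ.surjective v
    rcases hμ.1 w with h | h
    · exact absurd (hb.symm.trans (by rw [← hw, h, h])) hbv
    · rw [hw] at h
      rcases hv _ h.symm with rfl | rfl
      · exact hw
      · exact absurd (hμ.2 v (by rw [hb, hw])) (fun h => hbv (hb.symm.trans h))

lemma IsMovePerm.apply_eq_of_forall_adj (hμ : IsMovePerm G μ) (hν : IsMovePerm G ν) {v : V}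
    (h : ∀ w, G.Adj v w → (μ v = w ↔ ν v = w)) : μ v = ν v := by
  rcases hμ.1 v with hμv | hμv
  · rcases hν.1 v with hνv | hνv
    · rw [hμv, hνv]
    · exact (h _ hνv).2 rfl
  · exact ((h _ hμv).1 rfl).symm

end MovePerm

section SuspendedPath

variable {V : Type*} {G : SimpleGraph V} {μ ν : Perm V}

def IsSuspendedPath (G : SimpleGraph V) (Q : ℕ → V) (m : ℕ) : Prop :=
  Set.InjOn Q (Set.Iic (m + 1)) ∧
    ∀ i, 1 ≤ i → i ≤ m → ∀ x, G.Adj (Q i) x → x = Q (i - 1) ∨ x = Q (i + 1)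

variable {Q : ℕ → V} {m : ℕ}

lemma IsSuspendedPath.apply_ne {i j : ℕ} (hQ : IsSuspendedPath G Q m) (hi : i ≤ m + 1)
    (hj : j ≤ m + 1) (hij : i ≠ j) : Q i ≠ Q j :=
  fun h => hij (hQ.1 (Set.mem_Iic.2 hi) (Set.mem_Iic.2 hj) h)

lemma IsMovePerm.exists_shift (hμ : IsMovePerm G μ) (hQ : IsSuspendedPath G Q m) (hm : 1 ≤ m) :
    ∃ s ≤ 2, ∀ i, 1 ≤ i → i ≤ m → μ (Q i) = Q (i + s - 1) := by
  have hnbr (i) (hi : 1 ≤ i) (him : i ≤ m) :=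
    hμ.apply_eq_iff_apply_eq (hQ.apply_ne (i := i - 1) (j := i) (by omega) (by omega) (by omega))
      (hQ.apply_ne (i := i + 1) (j := i) (by omega) (by omega) (by omega)) (hQ.2 i hi him)
  have hnbr' (i) (hi : 1 ≤ i) (him : i ≤ m) :=
    hμ.apply_eq_iff_apply_eq (hQ.apply_ne (i := i + 1) (j := i) (by omega) (by omega) (by omega))
      (hQ.apply_ne (i := i - 1) (j := i) (by omega) (by omega) (by omega))
      (fun x hx => (hQ.2 i hi him x hx).symm)
  have h1 : μ (Q 1) = Q 1 ∨ μ (Q 1) = Q 0 ∨ μ (Q 1) = Q 2 :=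
    (hμ.1 (Q 1)).imp_right (hQ.2 1 le_rfl hm _)
  rcases h1 with h | h | h
  · refine ⟨1, by norm_num, fun i hi => Nat.le_induction (fun _ => h) (fun i hi ih him => ?_) i hi⟩
    rw [Nat.add_sub_cancel] at ih ⊢
    have hi' := ih (by omega)
    rcases hμ.1 (Q (i + 1)) with h' | h'
    · exact h'
    rcases hQ.2 (i + 1) (by omega) him _ h' with h' | h'
    · rw [Nat.add_sub_cancel, ← hi'] at h'
      exact absurd (μ.injective h') (hQ.apply_ne (by omega) (by omega) (by omega))
    · exact absurd (hi'.symm.trans ((hnbr (i + 1) (by omega) him).2 h'))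
        (hQ.apply_ne (by omega) (by omega) (by omega))
  · refine ⟨0, by norm_num, fun i hi => Nat.le_induction (fun _ => h) (fun i hi ih him => ?_) i hi⟩
    simpa using (hnbr' i hi (by omega)).2 (ih (by omega))
  · refine ⟨2, le_rfl, fun i hi => Nat.le_induction (fun _ => h) (fun i hi ih him => ?_) i hi⟩
    simpa using (hnbr (i + 1) (by omega) him).1 (by simpa using ih (by omega))

lemma IsMovePerm.eqOn_suspendedPath (hμ : IsMovePerm G μ) (hν : IsMovePerm G ν)
    (hQ : IsSuspendedPath G Q m) (hm : 1 ≤ m) (h1 : μ (Q 1) = ν (Q 1)) {i : ℕ} (hi : 1 ≤ i)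
    (him : i ≤ m) : μ (Q i) = ν (Q i) := by
  obtain ⟨s, hs, hμs⟩ := hμ.exists_shift hQ hm
  obtain ⟨t, ht, hνt⟩ := hν.exists_shift hQ hm
  have hst : s = t := by
    have := hQ.1 (Set.mem_Iic.2 (by omega)) (Set.mem_Iic.2 (by omega))
      ((hμs 1 le_rfl hm).symm.trans (h1.trans (hνt 1 le_rfl hm)))
    omega
  rw [hμs i hi him, hνt i hi him, hst]

end SuspendedPath

section Feasibility

variable {V : Type*} {G : SimpleGraph V}

lemma IsSolution.snoc {X Y : Perm V} {T : ℕ} {Xs : ℕ → Perm V} (h : IsSolution G X Y T Xs)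
    {μ : Perm V} (hμ : IsMovePerm G μ) :
    IsSolution G X (μ * Y) (T + 1) (fun t => if t ≤ T then Xs t else μ * Y) := by
  obtain ⟨h0, hT, hstep⟩ := h
  refine ⟨by simpa using h0, by simp, fun t ht => ?_⟩
  rcases Nat.lt_or_ge t T with htT | htT
  · simpa [htT.le, Nat.succ_le_of_lt htT] using hstep t htT
  · obtain rfl : t = T := by omega
    simpa [hT] using hμ.isMove Y

lemma exists_isSolution_of_mem_closure {S : Set (Perm V)} (hS : ∀ μ ∈ S, IsMovePerm G μ)
    {g : Perm V} (hg : g ∈ Subgroup.closure S) : ∃ T Xs, IsSolution G 1 g T Xs := by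
  induction hg using Subgroup.closure_induction_left with
  | one => exact ⟨0, fun _ => 1, rfl, rfl, fun _ h => absurd h (Nat.not_lt_zero _)⟩
  | mul_left μ hμ _ _ ih =>
    obtain ⟨T, Xs, h⟩ := ih
    exact ⟨_, _, h.snoc (hS μ hμ)⟩
  | inv_mul_cancel μ hμ _ _ ih =>
    obtain ⟨T, Xs, h⟩ := ih
    exact ⟨_, _, h.snoc (hS μ hμ).inv⟩

end Feasibility

section Counting

variable {V : Type*} [Fintype V] [DecidableEq V] (G : SimpleGraph V)

open Classical in
noncomputable def movePerms : Finset (Perm V) := Finset.univ.filter (IsMovePerm G)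

variable {G}

lemma mem_movePerms {μ : Perm V} : μ ∈ movePerms G ↔ IsMovePerm G μ := by
  simp [movePerms]

lemma IsSolution.mem_movePerms_pow {XG : Perm V} {T : ℕ} {Xs : ℕ → Perm V}
    (h : IsSolution G 1 XG T Xs) : XG ∈ movePerms G ^ T := by
  obtain ⟨h0, hT, hstep⟩ := h
  suffices ∀ t ≤ T, Xs t ∈ movePerms G ^ t from hT ▸ this T le_rfl
  intro t
  induction t with
  | zero => simp [h0]
  | succ t ih =>
    intro ht
    rw [pow_succ', ← inv_mul_cancel_right (Xs (t + 1)) (Xs t)]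
    exact Finset.mul_mem_mul (mem_movePerms.2 (isMove_iff_isMovePerm.1 (hstep t ht)))
      (ih (by omega))

end Counting

section Rotation

variable {α β : Type*}

lemma viaEmbedding_swap [DecidableEq α] [DecidableEq β] (e : α ↪ β) (a b : α) :
    (swap a b).viaEmbedding e = swap (e a) (e b) := by
  ext v
  by_cases hv : v ∈ Set.range e
  · obtain ⟨k, rfl⟩ := hv
    rw [viaEmbedding_apply, ← e.injective.swap_apply]
  · rw [viaEmbedding_apply_of_notMem _ _ _ hv,
      swap_apply_of_ne_of_ne (fun h => hv ⟨a, h.symm⟩) (fun h => hv ⟨b, h.symm⟩)]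

lemma viaEmbeddingHom_mem_of_isCycle [Fintype α] [DecidableEq α] [DecidableEq β] (e : α ↪ β)
    {σ : Perm α} (hσ : σ.IsCycle) (hsupp : σ.support = Finset.univ) (x : α)
    {H : Subgroup (Perm β)} (hσH : σ.viaEmbedding e ∈ H) (hswap : swap (e x) (e (σ x)) ∈ H)
    (π : Perm α) : viaEmbeddingHom e π ∈ H := by
  have hπ : π ∈ Subgroup.closure {σ, swap x (σ x)} := by
    rw [closure_cycle_adjacent_swap hσ hsupp x]; trivial
  refine (Subgroup.closure_le _).2 ?_ (MonoidHom.map_closure (viaEmbeddingHom e) _ ▸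
    Subgroup.mem_map_of_mem _ hπ)
  rintro _ ⟨τ, rfl | rfl, rfl⟩
  · exact hσH
  · rwa [viaEmbeddingHom_apply, viaEmbedding_swap]

variable {G : SimpleGraph β}

lemma isMovePerm_viaEmbedding_finRotate {M : ℕ} (hM : 3 ≤ M) (e : Fin M ↪ β)
    (he : ∀ k, G.Adj (e k) (e (finRotate M k))) : IsMovePerm G ((finRotate M).viaEmbedding e) := by
  refine ⟨fun v => ?_, fun v hv => ?_⟩ <;> by_cases hr : v ∈ Set.range e
  · obtain ⟨k, rfl⟩ := hr
    exact .inr (by rw [viaEmbedding_apply]; exact he k)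
  · exact .inl (viaEmbedding_apply_of_notMem _ _ _ hr)
  · obtain ⟨k, rfl⟩ := hr
    rw [viaEmbedding_apply, viaEmbedding_apply] at hv
    obtain ⟨M, rfl⟩ : ∃ M', M = M' + 1 := ⟨M - 1, by omega⟩
    have h := e.injective hv
    rw [finRotate_apply, finRotate_apply, add_assoc, add_eq_left, Fin.ext_iff, Fin.val_add,
      Fin.val_one', Fin.val_zero, Nat.mod_eq_of_lt (by omega : 1 < M + 1),
      Nat.mod_eq_of_lt (by omega : 1 + 1 < M + 1)] at h
    omega
  · exact viaEmbedding_apply_of_notMem _ _ _ hr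

end Rotation

lemma eventually_pow_lt_factorial (K C : ℕ) :
    ∀ᶠ n in Filter.atTop, K ^ (C * (7 * n + 6)) < (6 * n + 6)! := by
  have h6 : Filter.Tendsto (fun n => 6 * n + 6) Filter.atTop Filter.atTop :=
    Filter.tendsto_atTop_atTop.2 fun b => ⟨b, fun n hn => by omega⟩
  filter_upwards [h6.eventually (Nat.eventually_pow_lt_factorial_sub ((K + 1) ^ (2 * C)) 0)]
    with n hn
  calc K ^ (C * (7 * n + 6)) ≤ (K + 1) ^ (C * (7 * n + 6)) := Nat.pow_le_pow_left (by omega) _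
    _ ≤ (K + 1) ^ (2 * C * (6 * n + 6)) := Nat.pow_le_pow_right (by omega) (by nlinarith)
    _ = ((K + 1) ^ (2 * C)) ^ (6 * n + 6) := pow_mul _ _ _
    _ < (6 * n + 6)! := by simpa using hn

namespace FigureEight

def len (n : ℕ) : Fin 3 → ℕ
  | 0 => n
  | _ => 3 * n + 2

/-- `vertex n p i` is the `i`-th vertex of path `p`, counted from junction `.inl 0` (`i = 0`) to
junction `.inl 1` (`i = len n p + 1`); larger `i` also give `.inl 1`. -/
def vertex (n : ℕ) : Fin 3 → ℕ → F8V n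
  | 0, i => if h : i = 0 then .inl 0 else
      if h' : i ≤ n then .inr (.inl ⟨i - 1, by omega⟩) else .inl 1
  | 1, i => if h : i = 0 then .inl 0 else
      if h' : i ≤ 3 * n + 2 then .inr (.inr (.inl ⟨i - 1, by omega⟩)) else .inl 1
  | 2, i => if h : i = 0 then .inl 0 else
      if h' : i ≤ 3 * n + 2 then .inr (.inr (.inr ⟨i - 1, by omega⟩)) else .inl 1

variable {n : ℕ}

lemma fin_three_cases (p : Fin 3) : p = 0 ∨ p = 1 ∨ p = 2 := by omega

@[simp] lemma vertex_zero (p : Fin 3) : vertex n p 0 = .inl 0 := by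
  obtain rfl | rfl | rfl := fin_three_cases p <;> rfl

@[simp] lemma vertex_len_add_one (p : Fin 3) : vertex n p (len n p + 1) = .inl 1 := by
  obtain rfl | rfl | rfl := fin_three_cases p <;> simp [vertex, len]

lemma vertex_eq_vertex_iff {p q : Fin 3} {i j : ℕ} (hi : i ≤ len n p + 1) (hj : j ≤ len n q + 1) :
    vertex n p i = vertex n q j ↔
      (i = 0 ∧ j = 0) ∨ (i = len n p + 1 ∧ j = len n q + 1) ∨ (p = q ∧ i = j) := by
  obtain rfl | rfl | rfl := fin_three_cases p <;> obtain rfl | rfl | rfl := fin_three_cases q <;>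
    simp only [len] at hi hj ⊢ <;> simp only [vertex] <;> split_ifs <;> simp [Fin.ext_iff] <;> omega

lemma exists_vertex (v : F8V n) :
    v = .inl 0 ∨ v = .inl 1 ∨ ∃ p i, 1 ≤ i ∧ i ≤ len n p ∧ v = vertex n p i := by
  rcases v with a | k | k | k
  · fin_cases a <;> simp
  · exact .inr (.inr ⟨0, k + 1, by omega, k.isLt, by simp [vertex, Nat.succ_le_of_lt k.isLt]⟩)
  · exact .inr (.inr ⟨1, k + 1, by omega, k.isLt, by simp [vertex, Nat.succ_le_of_lt k.isLt]⟩)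
  · exact .inr (.inr ⟨2, k + 1, by omega, k.isLt, by simp [vertex, Nat.succ_le_of_lt k.isLt]⟩)

lemma adj_vertex_iff {p : Fin 3} {i : ℕ} (hi1 : 1 ≤ i) (hi : i ≤ len n p) (x : F8V n) :
    (figureEight n).Adj (vertex n p i) x ↔ x = vertex n p (i - 1) ∨ x = vertex n p (i + 1) := by
  obtain rfl | rfl | rfl := fin_three_cases p <;> simp only [len] at hi <;>
    rcases x with a | k | k | k <;>
    simp only [figureEight, fromRel_adj, vertex, dif_neg (show i ≠ 0 by omega), dif_pos hi,
      F8Rel] <;>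
    split_ifs <;> (try fin_cases a) <;> simp [Fin.ext_iff] <;> first | contradiction | omega

lemma exists_eq_vertex_one_of_adj {x : F8V n} (hn : 1 ≤ n) (h : (figureEight n).Adj (.inl 0) x) :
    ∃ p, x = vertex n p 1 := by
  rcases x with a | k | k | k <;> simp [figureEight, fromRel_adj, F8Rel] at h
  · omega
  · exact ⟨0, by simp [vertex, hn, Fin.ext_iff, h]⟩
  · exact ⟨1, by simp [vertex, h]⟩
  · exact ⟨2, by simp [vertex, h]⟩

lemma exists_eq_vertex_len_of_adj {x : F8V n} (hn : 1 ≤ n) (h : (figureEight n).Adj (.inl 1) x) :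
    ∃ p, x = vertex n p (len n p) := by
  rcases x with a | k | k | k <;> simp [figureEight, fromRel_adj, F8Rel] at h
  · omega
  · exact ⟨0, by simp [vertex, len, show n ≠ 0 by omega, Fin.ext_iff]; omega⟩
  · exact ⟨1, by simp [vertex, len, Fin.ext_iff]; omega⟩
  · exact ⟨2, by simp [vertex, len, Fin.ext_iff]; omega⟩

lemma one_le_len (hn : 1 ≤ n) (p : Fin 3) : 1 ≤ len n p := by
  obtain rfl | rfl | rfl := fin_three_cases p <;> simp only [len] <;> omega

lemma adj_vertex_add_one {p : Fin 3} {i : ℕ} (hp : 1 ≤ len n p) (hi : i ≤ len n p) :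
    (figureEight n).Adj (vertex n p i) (vertex n p (i + 1)) := by
  rcases Nat.eq_zero_or_pos i with rfl | hi0
  · exact ((adj_vertex_iff le_rfl hp _).2 (.inl rfl)).symm
  · exact (adj_vertex_iff hi0 hi _).2 (.inr rfl)

lemma isSuspendedPath_vertex (p : Fin 3) :
    IsSuspendedPath (figureEight n) (vertex n p) (len n p) := by
  refine ⟨fun i hi j hj h => ?_, fun i hi1 hi x => (adj_vertex_iff hi1 hi x).1⟩
  rw [vertex_eq_vertex_iff hi hj] at h
  omega

lemma apply_inl_zero_eq_iff (hn : 1 ≤ n) {σ : Perm (F8V n)} (hσ : IsMovePerm (figureEight n) σ)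
    (p : Fin 3) : σ (.inl 0) = vertex n p 1 ↔ σ (vertex n p 1) = vertex n p 2 := by
  have hQ := isSuspendedPath_vertex (n := n) p
  simpa using hσ.apply_eq_iff_apply_eq (hQ.apply_ne (i := 0) (j := 1) (by omega) (by omega)
    (by omega)) (hQ.apply_ne (i := 2) (j := 1) (by have := one_le_len hn p; omega) (by omega)
    (by omega)) (adj_vertex_iff le_rfl (one_le_len hn p) · |>.1)

lemma apply_inl_one_eq_iff (hn : 1 ≤ n) {σ : Perm (F8V n)} (hσ : IsMovePerm (figureEight n) σ)
    (p : Fin 3) : σ (.inl 1) = vertex n p (len n p) ↔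
      σ (vertex n p (len n p)) = vertex n p (len n p - 1) := by
  have hQ := isSuspendedPath_vertex (n := n) p
  have hp := one_le_len hn p
  simpa using hσ.apply_eq_iff_apply_eq (hQ.apply_ne (i := len n p + 1) (j := len n p)
    (by omega) (by omega) (by omega))
    (hQ.apply_ne (i := len n p - 1) (j := len n p) (by omega) (by omega) (by omega))
    (fun x hx => (adj_vertex_iff hp le_rfl x |>.1 hx).symm)

lemma eq_of_apply_vertex_one (hn : 1 ≤ n) {μ ν : Perm (F8V n)}
    (hμ : IsMovePerm (figureEight n) μ) (hν : IsMovePerm (figureEight n) ν)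
    (h : ∀ p, μ (vertex n p 1) = ν (vertex n p 1)) : μ = ν := by
  have hpath (p : Fin 3) {i : ℕ} (hi1 : 1 ≤ i) (hi : i ≤ len n p) :
      μ (vertex n p i) = ν (vertex n p i) :=
    hμ.eqOn_suspendedPath hν (isSuspendedPath_vertex p) (one_le_len hn p) (h p) hi1 hi
  ext v
  rcases exists_vertex v with rfl | rfl | ⟨p, i, hi1, hi, rfl⟩
  · refine hμ.apply_eq_of_forall_adj hν fun w hw => ?_
    obtain ⟨p, rfl⟩ := exists_eq_vertex_one_of_adj hn hw
    rw [apply_inl_zero_eq_iff hn hμ, apply_inl_zero_eq_iff hn hν, h p]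
  · refine hμ.apply_eq_of_forall_adj hν fun w hw => ?_
    obtain ⟨p, rfl⟩ := exists_eq_vertex_len_of_adj hn hw
    rw [apply_inl_one_eq_iff hn hμ, apply_inl_one_eq_iff hn hν,
      hpath p (one_le_len hn p) le_rfl]
  · exact hpath p hi1 hi

lemma card_movePerms_le (hn : 1 ≤ n) : (movePerms (figureEight n)).card ≤ 27 := by
  let nbhd (p : Fin 3) : Finset (F8V n) := {vertex n p 0, vertex n p 1, vertex n p 2}
  have hmaps : Set.MapsTo (fun (μ : Perm (F8V n)) p => μ (vertex n p 1))
      ↑(movePerms (figureEight n)) ↑(Fintype.piFinset nbhd) := by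
    intro μ hμ
    simp only [Finset.mem_coe, mem_movePerms, Fintype.mem_piFinset] at hμ ⊢
    intro p
    rcases hμ.1 (vertex n p 1) with h | h
    · simp [nbhd, h]
    · rcases (adj_vertex_iff le_rfl (one_le_len hn p) _).1 h with h | h <;> simp [nbhd, h]
  calc (movePerms (figureEight n)).card ≤ (Fintype.piFinset nbhd).card :=
        Finset.card_le_card_of_injOn _ hmaps fun μ hμ ν hν h =>
          eq_of_apply_vertex_one hn (mem_movePerms.1 hμ) (mem_movePerms.1 hν) (congrFun h)
    _ ≤ 3 ^ 3 := by
        rw [Fintype.card_piFinset]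
        exact (Finset.prod_le_pow_card _ _ 3 fun p _ => Finset.card_le_three).trans_eq (by simp)
    _ = 27 := by norm_num

/-- The cycle through paths `p` and `q`: out along `p` for `k ≤ len n p + 1`, back along `q`
afterwards, returning to junction `.inl 0` at `k = len n p + len n q + 2`. -/
def ringVertex (n : ℕ) (p q : Fin 3) (k : ℕ) : F8V n :=
  if k ≤ len n p + 1 then vertex n p k else vertex n q (len n p + len n q + 2 - k)

lemma ringVertex_of_le (p q : Fin 3) {k : ℕ} (hk : k ≤ len n p + 1) :
    ringVertex n p q k = vertex n p k := if_pos hk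

lemma ringVertex_of_ge (p q : Fin 3) {k : ℕ} (hk : len n p + 1 ≤ k) :
    ringVertex n p q k = vertex n q (len n p + len n q + 2 - k) := by
  unfold ringVertex
  split_ifs with h
  · obtain rfl : k = len n p + 1 := by omega
    simp [show len n p + len n q + 2 - (len n p + 1) = len n q + 1 by omega]
  · rfl

variable {p q : Fin 3}

lemma ringVertex_injOn (hpq : p ≠ q) :
    Set.InjOn (ringVertex n p q) (Set.Iio (len n p + len n q + 2)) := by
  intro k hk l hl h
  simp only [Set.mem_Iio] at hk hl
  unfold ringVertex at h
  split_ifs at h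
  all_goals rw [vertex_eq_vertex_iff (by omega) (by omega)] at h
  all_goals simp only [hpq, hpq.symm, false_and, or_false, true_and] at h
  all_goals omega

lemma ringVertex_finRotate (k : Fin (len n p + len n q + 2)) :
    ringVertex n p q (finRotate _ k) = ringVertex n p q (k + 1) := by
  rw [coe_finRotate]
  split_ifs with h
  · rw [h, Fin.val_last, ringVertex_of_le p q (Nat.zero_le _), ringVertex_of_ge p q (by omega)]
    simp
  · rfl

def ringEmbedding (n : ℕ) (p q : Fin 3) (hpq : p ≠ q := by decide) :
    Fin (len n p + len n q + 2) ↪ F8V n :=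
  ⟨fun k => ringVertex n p q k, fun k l h => Fin.ext (ringVertex_injOn hpq k.isLt l.isLt h)⟩

noncomputable def rotation (n : ℕ) (p q : Fin 3) (hpq : p ≠ q := by decide) : Perm (F8V n) :=
  (finRotate _).viaEmbedding (ringEmbedding n p q hpq)

lemma rotation_apply_ringVertex (hpq : p ≠ q) {k : ℕ} (hk : k < len n p + len n q + 2) :
    rotation n p q hpq (ringVertex n p q k) = ringVertex n p q (k + 1) :=
  (viaEmbedding_apply (finRotate _) (ringEmbedding n p q hpq) ⟨k, hk⟩).trans
    (ringVertex_finRotate _)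

lemma rotation_apply_left (hpq : p ≠ q) {i : ℕ} (hi : i ≤ len n p) :
    rotation n p q hpq (vertex n p i) = vertex n p (i + 1) := by
  have h := rotation_apply_ringVertex (n := n) hpq (k := i) (by omega)
  rwa [ringVertex_of_le p q (by omega), ringVertex_of_le p q (by omega)] at h

lemma rotation_apply_right (hpq : p ≠ q) {i : ℕ} (hi : i ≤ len n q) :
    rotation n p q hpq (vertex n q (i + 1)) = vertex n q i := by
  have h := rotation_apply_ringVertex (n := n) hpq (k := len n p + len n q + 1 - i) (by omega)
  rwa [ringVertex_of_ge p q (by omega), ringVertex_of_ge p q (by omega),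
    show len n p + len n q + 2 - (len n p + len n q + 1 - i) = i + 1 by omega,
    show len n p + len n q + 2 - (len n p + len n q + 1 - i + 1) = i by omega] at h

lemma rotation_apply_of_ne (hpq : p ≠ q) {r : Fin 3} (hrp : r ≠ p) (hrq : r ≠ q) {i : ℕ}
    (hi1 : 1 ≤ i) (hi : i ≤ len n r) : rotation n p q hpq (vertex n r i) = vertex n r i := by
  refine viaEmbedding_apply_of_notMem _ _ _ fun ⟨k, hk⟩ => ?_
  change ringVertex n p q k = vertex n r i at hk
  unfold ringVertex at hk
  split_ifs at hk
  all_goals rw [vertex_eq_vertex_iff (by omega) (by omega)] at hk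
  all_goals simp only [hrp.symm, hrq.symm, false_and, or_false] at hk
  all_goals omega

lemma rotation_apply_inl_zero (hpq : p ≠ q) :
    rotation n p q hpq (.inl 0) = vertex n p 1 := by
  simpa using rotation_apply_left (n := n) hpq (Nat.zero_le _)

lemma rotation_apply_inl_one (hpq : p ≠ q) :
    rotation n p q hpq (.inl 1) = vertex n q (len n q) := by
  simpa using rotation_apply_right (n := n) hpq le_rfl

lemma rotation_apply_vertex_one (hpq : p ≠ q) : rotation n p q hpq (vertex n q 1) = .inl 0 := by
  simpa using rotation_apply_right (n := n) hpq (Nat.zero_le _)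

lemma isMovePerm_rotation (hn : 1 ≤ n) (hpq : p ≠ q) :
    IsMovePerm (figureEight n) (rotation n p q hpq) := by
  refine isMovePerm_viaEmbedding_finRotate (by have := one_le_len hn p; omega) _ fun k => ?_
  change (figureEight n).Adj (ringVertex n p q k) (ringVertex n p q (finRotate _ k))
  rw [ringVertex_finRotate]
  rcases Nat.lt_or_ge (k : ℕ) (len n p + 1) with hk | hk
  · rw [ringVertex_of_le p q hk.le, ringVertex_of_le p q hk]
    exact adj_vertex_add_one (one_le_len hn p) (by omega)
  · rw [ringVertex_of_ge p q hk, ringVertex_of_ge p q (by omega),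
      show len n p + len n q + 2 - k = len n p + len n q + 2 - (k + 1) + 1 by omega]
    exact (adj_vertex_add_one (one_le_len hn q) (by omega)).symm

lemma vertex_ne_inl_zero {p : Fin 3} {i : ℕ} (hi1 : 1 ≤ i) (hi : i ≤ len n p + 1) :
    vertex n p i ≠ .inl 0 := fun h => by
  have := (vertex_eq_vertex_iff (q := p) hi (Nat.zero_le _)).1 (h.trans (vertex_zero p).symm)
  omega

/-- `(rotation n 0 2)⁻¹ * rotation n 0 1` fixes path `0` and runs backwards around the cycle
through paths `1` and `2` with junction `.inl 0` cut out; `rotation n 1 2` undoes this except at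
`.inl 0` and its neighbour `vertex n 1 1`. -/
theorem rotation_mul_inv_mul_rotation (hn : 1 ≤ n) :
    rotation n 1 2 * (rotation n 0 2)⁻¹ * rotation n 0 1 = swap (.inl 0) (vertex n 1 1) := by
  have hinv {σ : Perm (F8V n)} {x y : F8V n} (h : σ y = x) : σ⁻¹ x = y :=
    Perm.inv_eq_iff_eq.2 h.symm
  have hne {r : Fin 3} {i : ℕ} (hi1 : 1 ≤ i) (hi : i ≤ len n r + 1) (h : r ≠ 1 ∨ i ≠ 1) :
      swap (.inl 0) (vertex n 1 1) (vertex n r i) = vertex n r i := by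
    refine swap_apply_of_ne_of_ne (vertex_ne_inl_zero hi1 hi) fun h' => ?_
    rw [vertex_eq_vertex_iff hi (by simp only [len]; omega)] at h'
    have := one_le_len hn 1
    omega
  ext v
  simp only [Perm.mul_apply]
  rcases exists_vertex v with rfl | rfl | ⟨r, i, hi1, hi, rfl⟩
  · rw [rotation_apply_inl_zero, hinv (rotation_apply_inl_zero _), rotation_apply_inl_zero,
      swap_apply_left]
  · have h1 := one_le_len hn 1
    rw [rotation_apply_inl_one, hinv (rotation_apply_of_ne _ (by decide) (by decide) h1 le_rfl),
      ← vertex_len_add_one 1, rotation_apply_left _ le_rfl, hne (by omega) le_rfl (by omega)]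
  obtain rfl | rfl | rfl := fin_three_cases r
  · rw [rotation_apply_left _ hi, hinv (rotation_apply_left _ hi),
      rotation_apply_of_ne _ (by decide) (by decide) hi1 hi, hne hi1 (by omega) (by omega)]
  · rcases Nat.lt_or_ge 1 i with hi2 | hi2
    · obtain ⟨j, rfl⟩ : ∃ j, i = j + 1 := ⟨i - 1, by omega⟩
      rw [rotation_apply_right _ (by omega),
        hinv (rotation_apply_of_ne _ (by decide) (by decide) (by omega) (by omega)),
        rotation_apply_left _ (by omega), hne hi1 (by omega) (by omega)]
    · obtain rfl : i = 1 := by omega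
      rw [rotation_apply_vertex_one, hinv (rotation_apply_vertex_one _), rotation_apply_vertex_one,
        swap_apply_right]
  · rw [rotation_apply_of_ne _ (by decide) (by decide) hi1 hi, hinv (rotation_apply_right _ hi),
      rotation_apply_right _ hi, hne hi1 (by omega) (by omega)]

def rotations (n : ℕ) : Set (Perm (F8V n)) := {rotation n 0 1, rotation n 0 2, rotation n 1 2}

lemma viaEmbeddingHom_ringEmbedding_mem_closure (hn : 1 ≤ n)
    (π : Perm (Fin (len n 1 + len n 2 + 2))) :
    viaEmbeddingHom (ringEmbedding n 1 2) π ∈ Subgroup.closure (rotations n) := by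
  have hmem {σ} (hσ : σ ∈ rotations n) := Subgroup.subset_closure hσ
  refine viaEmbeddingHom_mem_of_isCycle _ (isCycle_finRotate_of_le (by simp only [len]; omega))
    (support_finRotate_of_le (by simp only [len]; omega)) 0
    (hmem (Set.mem_insert_of_mem _ (Set.mem_insert_of_mem _ rfl))) ?_ π
  have he0 : (ringEmbedding n 1 2) 0 = .inl 0 :=
    (ringVertex_of_le 1 2 (Nat.zero_le _)).trans (vertex_zero 1)
  have he1 : (ringEmbedding n 1 2) (finRotate _ 0) = vertex n 1 1 := by
    change ringVertex n 1 2 (finRotate (len n 1 + len n 2 + 2) 0) = _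
    rw [ringVertex_finRotate, ringVertex_of_le 1 2 (by simp [len])]
    rfl
  rw [he0, he1, ← rotation_mul_inv_mul_rotation hn]
  exact mul_mem (mul_mem (hmem (by simp [rotations])) (inv_mem (hmem (by simp [rotations]))))
    (hmem (by simp [rotations]))

lemma exists_solution_notMem (hn : 1 ≤ n) {s : Finset (Perm (F8V n))}
    (hs : s.card < (6 * n + 6)!) : ∃ g ∉ s, ∃ T Xs, IsSolution (figureEight n) 1 g T Xs := by
  classical
  have hcard : (Finset.univ.image (viaEmbeddingHom (ringEmbedding n 1 2))).card = (6 * n + 6)! := by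
    rw [Finset.card_image_of_injective _ (viaEmbeddingHom_injective _), Finset.card_univ,
      Fintype.card_perm, Fintype.card_fin]
    congr 1
    simp only [len]
    ring
  obtain ⟨g, hg, hgs⟩ := Finset.exists_mem_notMem_of_card_lt_card (hcard ▸ hs)
  obtain ⟨π, -, rfl⟩ := Finset.mem_image.1 hg
  refine ⟨_, hgs, exists_isSolution_of_mem_closure ?_
    (viaEmbeddingHom_ringEmbedding_mem_closure hn π)⟩
  rintro μ (rfl | rfl | rfl) <;> exact isMovePerm_rotation hn _

end FigureEight

open FigureEight in
theorem no_general_linear_makespan_general (c : ℝ) :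
    ∃ (n : ℕ) (XI XG : Equiv.Perm (F8V n)),
      (∃ (T : ℕ) (Xs : ℕ → Equiv.Perm (F8V n)),
        IsSolution (figureEight n) XI XG T Xs) ∧
      (∀ (T : ℕ) (Xs : ℕ → Equiv.Perm (F8V n)),
        IsSolution (figureEight n) XI XG T Xs →
          c * ((7 * n + 6 : ℕ) : ℝ) < T) := by
  obtain ⟨n, hlt, hn⟩ :=
    ((eventually_pow_lt_factorial 27 ⌈c⌉₊).and (Filter.eventually_ge_atTop 1)).exists
  have hcard : (movePerms (figureEight n) ^ (⌈c⌉₊ * (7 * n + 6))).card < (6 * n + 6)! :=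
    (Finset.card_pow_le.trans (Nat.pow_le_pow_left (card_movePerms_le hn) _)).trans_lt hlt
  obtain ⟨XG, hXG, hfeas⟩ := exists_solution_notMem hn hcard
  refine ⟨n, 1, XG, hfeas, fun T Xs hsol => lt_of_not_ge fun hT => hXG ?_⟩
  have hTL : T ≤ ⌈c⌉₊ * (7 * n + 6) := by
    have := hT.trans (mul_le_mul_of_nonneg_right (Nat.le_ceil c) (Nat.cast_nonneg _))
    exact_mod_cast this
  exact Finset.pow_subset_pow_right (mem_movePerms.2 isMovePerm_one) hTL hsol.mem_movePerms_pow

/-- For every constant `c > 0` there is a feasible instance on some (figure-8) graph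
whose every solution has makespan strictly greater than `c·|V|`: no algorithm can
guarantee linear (or sub-linear) makespan on arbitrary graphs. -/
theorem no_general_linear_makespan (c : ℝ) (hc : 0 < c) :
    ∃ (n : ℕ) (XI XG : Equiv.Perm (F8V n)),
      (∃ (T : ℕ) (Xs : ℕ → Equiv.Perm (F8V n)),
        IsSolution (figureEight n) XI XG T Xs) ∧
      (∀ (T : ℕ) (Xs : ℕ → Equiv.Perm (F8V n)),
        IsSolution (figureEight n) XI XG T Xs →
          c * ((7 * n + 6 : ℕ) : ℝ) < T) :=
  no_general_linear_makespan_general c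
end

section
/- Every instance (G, X_I, X_G), where G is the 3 × 2 grid graph (6 vertices, fully occupied by 6 labeled robots) and X_I, X_G are arbitrary configurations, is feasible: there exists a finite sequence of synchronous moves taking X_I to X_G. (The 3 × 2 grid is a figure-8 graph with 6 vertices, so any two robots on it can be exchanged.) -/
/-!
Synchronous moves are reversible and commute with relabelling the robots, so the configurations
reachable from the identity form a subgroup of `Perm V`, and an instance `(X_I, X_G)` is feasible
as soon as `X_G * X_I⁻¹` lies in it. On the `3 × 2` grid the two unit squares and the boundary
6-cycle can each be rotated in a single move. Rotating the left square, then the right one, then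
the boundary backwards exchanges the two robots on the bottom edge `(0,0) — (1,0)`; a 6-cycle
together with the transposition of two cyclically adjacent points generates the whole
symmetric group.
-/

open SimpleGraph

def gridGraph (m n : ℕ) : SimpleGraph (Fin m × Fin n) :=
  (pathGraph m) □ (pathGraph n)

open Equiv Relation

namespace IsMove

variable {V : Type*} {G : SimpleGraph V} {X Y : Perm V}

theorem symm (h : IsMove G X Y) : IsMove G Y X := by
  refine ⟨fun r ↦ (h.1 r).imp Eq.symm G.adj_symm, fun r s hrs ⟨hr, hs, _⟩ ↦ ?_⟩
  exact h.2 r s hrs ⟨hs.symm, hr.symm, fun he ↦ hrs (X.injective he)⟩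

theorem mul_right (h : IsMove G X Y) (σ : Perm V) : IsMove G (X * σ) (Y * σ) :=
  ⟨fun r ↦ h.1 (σ r), fun r s hrs ↦ h.2 (σ r) (σ s) (σ.injective.ne hrs)⟩

end IsMove

section Reachability

variable {V : Type*} {G : SimpleGraph V}

theorem exists_isSolution_of_reflTransGen {X Y : Perm V} (h : ReflTransGen (IsMove G) X Y) :
    ∃ T Xs, IsSolution G X Y T Xs := by
  induction h with
  | refl => exact ⟨0, fun _ ↦ X, rfl, rfl, fun _ ht ↦ absurd ht (Nat.not_lt_zero _)⟩
  | @tail Y Z _ hYZ ih =>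
    obtain ⟨T, Xs, h0, hT, hmoves⟩ := ih
    refine ⟨T + 1, fun t ↦ if t ≤ T then Xs t else Z, by simpa using h0, by simp, ?_⟩
    intro t ht
    rcases Nat.lt_or_eq_of_le (Nat.le_of_lt_succ ht) with ht | rfl
    · simpa [ht.le, Nat.succ_le_of_lt ht] using hmoves t ht
    · simpa [hT] using hYZ

theorem Relation.ReflTransGen.isMove_symm {X Y : Perm V} (h : ReflTransGen (IsMove G) X Y) :
    ReflTransGen (IsMove G) Y X :=
  ReflTransGen.mono (fun _ _ ↦ IsMove.symm) _ _ (reflTransGen_swap.2 h)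

theorem Relation.ReflTransGen.isMove_mul_right {X Y : Perm V} (h : ReflTransGen (IsMove G) X Y)
    (σ : Perm V) : ReflTransGen (IsMove G) (X * σ) (Y * σ) :=
  ReflTransGen.lift (· * σ) (fun _ _ hm ↦ hm.mul_right σ) _ _ h

variable (G) in
def reachableSubgroup : Subgroup (Perm V) where
  carrier := {π | ReflTransGen (IsMove G) 1 π}
  one_mem' := ReflTransGen.refl
  mul_mem' {π ρ} hπ hρ := hρ.trans (by simpa using hπ.isMove_mul_right ρ)
  inv_mem' {π} hπ := by simpa using (hπ.isMove_mul_right π⁻¹).isMove_symm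

theorem reflTransGen_isMove_of_mem {X Y : Perm V} (h : Y * X⁻¹ ∈ reachableSubgroup G) :
    ReflTransGen (IsMove G) X Y := by
  simpa using ReflTransGen.isMove_mul_right h X

theorem mem_reachableSubgroup_of_isMove_one {π : Perm V} (h : IsMove G 1 π) :
    π ∈ reachableSubgroup G :=
  ReflTransGen.single h

end Reachability

instance (m n : ℕ) : DecidableRel (gridGraph m n).Adj := fun x y ↦
  decidable_of_iff
    (((x.1 : ℕ) + 1 = y.1 ∨ (y.1 : ℕ) + 1 = x.1) ∧ x.2 = y.2 ∨
      ((x.2 : ℕ) + 1 = y.2 ∨ (y.2 : ℕ) + 1 = x.2) ∧ x.1 = y.1)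
    (by simp only [gridGraph, boxProd_adj, pathGraph_adj])

def leftSquareRotation : Perm (Fin 3 × Fin 2) := [(0, 0), (1, 0), (1, 1), (0, 1)].formPerm

def rightSquareRotation : Perm (Fin 3 × Fin 2) := [(1, 0), (2, 0), (2, 1), (1, 1)].formPerm

def boundaryRotation : Perm (Fin 3 × Fin 2) :=
  [(0, 0), (1, 0), (2, 0), (2, 1), (1, 1), (0, 1)].formPerm

theorem isMove_one_leftSquareRotation : IsMove (gridGraph 3 2) 1 leftSquareRotation := by
  unfold IsMove; decide

theorem isMove_one_rightSquareRotation : IsMove (gridGraph 3 2) 1 rightSquareRotation := by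
  unfold IsMove; decide

theorem isMove_one_boundaryRotation : IsMove (gridGraph 3 2) 1 boundaryRotation := by
  unfold IsMove; decide

theorem boundaryRotation_inv_mul_rightSquareRotation_mul_leftSquareRotation :
    boundaryRotation⁻¹ * rightSquareRotation * leftSquareRotation =
      swap (0, 0) (boundaryRotation (0, 0)) := by
  decide

theorem boundaryRotation_isCycle : boundaryRotation.IsCycle :=
  List.isCycle_formPerm (by decide) (by decide)

theorem boundaryRotation_support : boundaryRotation.support = Finset.univ := by decide

theorem reachableSubgroup_gridGraph_three_two : reachableSubgroup (gridGraph 3 2) = ⊤ := by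
  rw [eq_top_iff, ← Perm.closure_cycle_adjacent_swap boundaryRotation_isCycle
    boundaryRotation_support (0, 0), Subgroup.closure_le, Set.insert_subset_iff,
    Set.singleton_subset_iff, ← boundaryRotation_inv_mul_rightSquareRotation_mul_leftSquareRotation]
  have hC := mem_reachableSubgroup_of_isMove_one isMove_one_boundaryRotation
  have hB := mem_reachableSubgroup_of_isMove_one isMove_one_rightSquareRotation
  have hA := mem_reachableSubgroup_of_isMove_one isMove_one_leftSquareRotation
  exact ⟨hC, mul_mem (mul_mem (inv_mem hC) hB) hA⟩

/-- Every instance on the fully occupied `3 × 2` grid is feasible. -/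
theorem grid32_feasible (XI XG : Equiv.Perm (Fin 3 × Fin 2)) :
    ∃ (T : ℕ) (Xs : ℕ → Equiv.Perm (Fin 3 × Fin 2)),
      IsSolution (gridGraph 3 2) XI XG T Xs :=
  exists_isSolution_of_reflTransGen <| reflTransGen_isMove_of_mem <|
    reachableSubgroup_gridGraph_three_two ▸ Subgroup.mem_top _
end
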